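/- Let d ≥ 1 and let Σ and Σ_m be real symmetric positive definite d × d matrices. Set V := Σ^{−1/2} Σ_m Σ^{−1/2}, where Σ^{−1/2} is the inverse of the positive definite square root of Σ. Then, as λ → 0 from the right, (2π)^{−λd/2} · (1/λ) · [ (det Σ_m)^{−λ/(2(λ+1))} · det(λ V⁻¹ + I_d)^{−1/2} − (det Σ)^{−λ/(2(λ+1))} · (λ+1)^{−d/2} ] converges to −(1/2) · ( log(det Σ_m / det Σ) + trace(Σ_m⁻¹ Σ) − d ). -/

import Mathlib

open Matrix Filter Real


open scoped ComplexOrder in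
/-- The positive semidefinite square root of a positive semidefinite matrix
(the definition Mathlib had in December 2024, since removed). -/
noncomputable def Matrix.PosSemidef.sqrt {n 𝕜 : Type*} [Fintype n] [DecidableEq n] [RCLike 𝕜]
    {A : Matrix n n 𝕜} (hA : A.PosSemidef) : Matrix n n 𝕜 :=
  hA.isHermitian.eigenvectorUnitary.1 * diagonal ((↑) ∘ (√·) ∘ hA.isHermitian.eigenvalues) *
    (star hA.isHermitian.eigenvectorUnitary : Matrix n n 𝕜)

private lemma psd_sqrt_mul_self_aux {d : ℕ} {A : Matrix (Fin d) (Fin d) ℝ} (hA : A.PosSemidef) :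
    Matrix.PosSemidef.sqrt hA * Matrix.PosSemidef.sqrt hA = A := by
  conv_rhs => rw [hA.isHermitian.spectral_theorem, Unitary.conjStarAlgAut_apply]
  unfold Matrix.PosSemidef.sqrt
  have hU := Unitary.coe_star_mul_self hA.isHermitian.eigenvectorUnitary
  set U : Matrix (Fin d) (Fin d) ℝ := (hA.isHermitian.eigenvectorUnitary : Matrix (Fin d) (Fin d) ℝ)
  set D := diagonal ((RCLike.ofReal : ℝ → ℝ) ∘ (√·) ∘ hA.isHermitian.eigenvalues)
  have h1 : U * D * star U * (U * D * star U) = U * (D * (star U * U) * D) * star U := by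
    simp only [mul_assoc]
  rw [h1, hU, mul_one, diagonal_mul_diagonal]
  congr 2
  ext i j
  simp [diagonal_apply, Real.mul_self_sqrt (hA.eigenvalues_nonneg i)]

private lemma det_smul_add_one_hasDerivAt (d : ℕ) (W : Matrix (Fin d) (Fin d) ℝ) :
    HasDerivAt (fun l : ℝ => (l • W + 1).det) W.trace 0 := by
  have key : (fun l : ℝ => (l • W + 1).det) =
      fun l : ℝ => 1 + W.trace * l +
        ((1 + (Polynomial.X : Polynomial ℝ) • W.map Polynomial.C).det).divX.divX.eval l * l ^ 2 := by
    funext l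
    rw [add_comm (l • W) 1, Matrix.det_one_add_smul]
  rw [key]
  set q := ((1 + (Polynomial.X : Polynomial ℝ) • W.map Polynomial.C).det).divX.divX
  have h1 : HasDerivAt (fun l : ℝ => 1 + W.trace * l + q.eval l * l ^ 2)
      (0 + W.trace * 1 + (q.derivative.eval 0 * 0 ^ 2 + q.eval 0 * (2 * 0 ^ 1))) 0 :=
    ((hasDerivAt_const 0 1).add ((hasDerivAt_id 0).const_mul W.trace)).add
      ((q.hasDerivAt 0).mul (hasDerivAt_pow 2 0))
  simpa using h1

/-- **λ → 0 limit of the Hölder-based limiting criterion integrand.** With `Σ` (here `S`)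
the true diffusion matrix, `Σ_m` (here `Sm`) the candidate matrix, and
`V = Σ^{-1/2} Σ_m Σ^{-1/2}`, as `λ → 0+`,
`(2π)^{−λd/2} λ⁻¹ [ (det Σ_m)^{−λ/(2(λ+1))} det(λV⁻¹+I)^{−1/2}`
`  − (det Σ)^{−λ/(2(λ+1))} (λ+1)^{−d/2} ]`
converges to `−(1/2)(log(det Σ_m/det Σ) + trace(Σ_m⁻¹ Σ) − d)`. -/
theorem holder_criterion_limit
    (d : ℕ) (hd : 1 ≤ d) (S Sm : Matrix (Fin d) (Fin d) ℝ)
    (hS : S.PosDef) (hSm : Sm.PosDef) :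
    Tendsto (fun lam : ℝ =>
      (2 * π) ^ (-(lam * (d : ℝ)) / 2) * (1 / lam) *
        (Sm.det ^ (-lam / (2 * (lam + 1))) *
            ((lam • ((Matrix.PosSemidef.sqrt hS.posSemidef)⁻¹ * Sm * (Matrix.PosSemidef.sqrt hS.posSemidef)⁻¹)⁻¹
              + 1).det) ^ (-(1 : ℝ) / 2)
          - S.det ^ (-lam / (2 * (lam + 1))) * (lam + 1) ^ (-(d : ℝ) / 2)))
      (nhdsWithin 0 (Set.Ioi 0))
      (nhds (-(1 / 2) * (Real.log (Sm.det / S.det) + (Sm⁻¹ * S).trace - d))) := by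
  set R := Matrix.PosSemidef.sqrt hS.posSemidef with hRdef
  set W := (R⁻¹ * Sm * R⁻¹)⁻¹ with hWdef
  have hdetS : 0 < S.det := hS.det_pos
  have hdetSm : 0 < Sm.det := hSm.det_pos
  have hRR : R * R = S := psd_sqrt_mul_self_aux hS.posSemidef
  have hdetR : R.det ≠ 0 := by
    intro h
    have : R.det * R.det = S.det := by rw [← Matrix.det_mul, hRR]
    rw [h, mul_zero] at this
    exact hdetS.ne this
  -- trace identity
  have htr : W.trace = (Sm⁻¹ * S).trace := by
    have hRu : IsUnit R.det := isUnit_iff_ne_zero.mpr hdetR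
    have hW : W = R * (Sm⁻¹ * R) := by
      rw [hWdef, Matrix.mul_inv_rev, Matrix.mul_inv_rev,
        Matrix.nonsing_inv_nonsing_inv _ hRu]
    rw [hW, Matrix.trace_mul_comm, mul_assoc, hRR]
  -- exponent derivative
  have he : HasDerivAt (fun l : ℝ => -l / (2 * (l + 1))) (-1 / 2 : ℝ) 0 := by
    have h1 : HasDerivAt (fun l : ℝ => -l) (-1 : ℝ) 0 := by
      exact (hasDerivAt_id' (0:ℝ)).neg
    have h2 : HasDerivAt (fun l : ℝ => 2 * (l + 1)) (2 : ℝ) 0 := by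
      simpa using ((hasDerivAt_id (0:ℝ)).add_const (1:ℝ)).const_mul (2:ℝ)
    have := h1.div h2 (by norm_num)
    exact this.congr_deriv (by norm_num)
  -- A and its derivative
  set A : ℝ → ℝ := fun l => Sm.det ^ (-l / (2 * (l + 1))) * ((l • W + 1).det) ^ (-(1:ℝ)/2)
    with hAdef
  have hA0 : A 0 = 1 := by simp [hAdef]
  have hA1 : HasDerivAt (fun l : ℝ => Sm.det ^ (-l / (2 * (l + 1))))
      (-1 / 2 * Real.log Sm.det) 0 := by
    have := (hasDerivAt_const (0:ℝ) Sm.det).rpow he (by simpa using hdetSm)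
    simpa using this
  have hdet : HasDerivAt (fun l : ℝ => (l • W + 1).det) W.trace 0 :=
    det_smul_add_one_hasDerivAt d W
  have hdet0 : ((0:ℝ) • W + 1).det = 1 := by simp
  have hA2 : HasDerivAt (fun l : ℝ => ((l • W + 1).det) ^ (-(1:ℝ)/2))
      (-1 / 2 * W.trace) 0 := by
    have := hdet.rpow_const (p := -(1:ℝ)/2) (Or.inl (by rw [hdet0]; norm_num))
    rw [hdet0] at this
    simpa [mul_comm] using this
  have hA : HasDerivAt A (-1 / 2 * Real.log Sm.det + -1 / 2 * W.trace) 0 := by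
    have := hA1.mul hA2
    exact this.congr_deriv (by simp [hdet0])
  -- B and its derivative
  set B : ℝ → ℝ := fun l => S.det ^ (-l / (2 * (l + 1))) * (l + 1) ^ (-(d:ℝ)/2) with hBdef
  have hB0 : B 0 = 1 := by simp [hBdef]
  have hB1 : HasDerivAt (fun l : ℝ => S.det ^ (-l / (2 * (l + 1))))
      (-1 / 2 * Real.log S.det) 0 := by
    have := (hasDerivAt_const (0:ℝ) S.det).rpow he (by simpa using hdetS)
    simpa using this
  have hB2 : HasDerivAt (fun l : ℝ => (l + 1) ^ (-(d:ℝ)/2)) (-(d:ℝ)/2) 0 := by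
    have := ((hasDerivAt_id (0:ℝ)).add_const (1:ℝ)).rpow_const
      (p := -(d:ℝ)/2) (Or.inl (by norm_num))
    simpa using this
  have hB : HasDerivAt B (-1 / 2 * Real.log S.det + -(d:ℝ)/2) 0 := by
    have := hB1.mul hB2
    exact this.congr_deriv (by simp)
  -- slopes
  have hAslope : Tendsto (fun l : ℝ => (A l - 1) / l) (nhdsWithin 0 (Set.Ioi 0))
      (nhds (-1 / 2 * Real.log Sm.det + -1 / 2 * W.trace)) := by
    have := (hasDerivAt_iff_tendsto_slope.mp hA).mono_left
      (nhdsWithin_mono 0 (fun x hx => (Set.mem_Ioi.mp hx).ne' : Set.Ioi 0 ⊆ {(0:ℝ)}ᶜ))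
    refine this.congr fun l => ?_
    simp [slope_def_field, hA0]
  have hBslope : Tendsto (fun l : ℝ => (B l - 1) / l) (nhdsWithin 0 (Set.Ioi 0))
      (nhds (-1 / 2 * Real.log S.det + -(d:ℝ)/2)) := by
    have := (hasDerivAt_iff_tendsto_slope.mp hB).mono_left
      (nhdsWithin_mono 0 (fun x hx => (Set.mem_Ioi.mp hx).ne' : Set.Ioi 0 ⊆ {(0:ℝ)}ᶜ))
    refine this.congr fun l => ?_
    simp [slope_def_field, hB0]
  -- prefactor
  have hpref : Tendsto (fun l : ℝ => (2 * π) ^ (-(l * (d:ℝ)) / 2)) (nhdsWithin 0 (Set.Ioi 0))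
      (nhds 1) := by
    have hc : ContinuousAt (fun y : ℝ => (2 * π) ^ y) 0 :=
      Real.continuousAt_const_rpow (by positivity)
    have hg : Tendsto (fun l : ℝ => -(l * (d:ℝ)) / 2) (nhdsWithin 0 (Set.Ioi 0)) (nhds 0) := by
      have : Continuous (fun l : ℝ => -(l * (d:ℝ)) / 2) := by continuity
      simpa using (this.tendsto 0).mono_left nhdsWithin_le_nhds
    have := (hc.tendsto.comp hg)
    simpa [Real.rpow_zero, Function.comp_def] using this
  -- combine
  have hmain : Tendsto (fun l : ℝ =>
      (2 * π) ^ (-(l * (d:ℝ)) / 2) * ((A l - 1) / l - (B l - 1) / l))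
      (nhdsWithin 0 (Set.Ioi 0))
      (nhds (1 * ((-1 / 2 * Real.log Sm.det + -1 / 2 * W.trace)
        - (-1 / 2 * Real.log S.det + -(d:ℝ)/2)))) :=
    hpref.mul (hAslope.sub hBslope)
  have heq : ∀ᶠ l in nhdsWithin (0:ℝ) (Set.Ioi 0),
      (2 * π) ^ (-(l * (d:ℝ)) / 2) * ((A l - 1) / l - (B l - 1) / l) =
      (2 * π) ^ (-(l * (d:ℝ)) / 2) * (1 / l) * (A l - B l) := by
    filter_upwards [self_mem_nhdsWithin] with l hl
    have hl0 : l ≠ 0 := (Set.mem_Ioi.mp hl).ne'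
    field_simp
    ring
  have final := hmain.congr' heq
  have hval : (1 : ℝ) * ((-1 / 2 * Real.log Sm.det + -1 / 2 * W.trace)
        - (-1 / 2 * Real.log S.det + -(d:ℝ)/2)) =
      -(1 / 2) * (Real.log (Sm.det / S.det) + (Sm⁻¹ * S).trace - d) := by
    rw [Real.log_div hdetSm.ne' hdetS.ne', htr]
    ring
  rw [hval] at final
  exact final
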